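/- Whitman's condition: in a free lattice, for generators (variables) x and elements a, b, if x ≤ a ⊔ b then x ≤ a or x ≤ b. -/
import Mathlib


/-- Lattice terms (formulas) over a variable set `X`. -/
inductive LatTerm (X : Type) : Type
  | var : X → LatTerm X
  | meet : LatTerm X → LatTerm X → LatTerm X
  | join : LatTerm X → LatTerm X → LatTerm X

/-- Evaluation of a lattice term in a lattice `L` under an assignment `σ`. -/
def LatTerm.eval {X L : Type} [Lattice L] (σ : X → L) : LatTerm X → L
  | .var x => σ x
  | .meet a b => a.eval σ ⊓ b.eval σ
  | .join a b => a.eval σ ⊔ b.eval σ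

/-- The order of the free lattice over `X`: inequalities between lattice terms
derivable from the lattice axioms. -/
inductive FreeLatLe {X : Type} : LatTerm X → LatTerm X → Prop
  | refl (a) : FreeLatLe a a
  | trans {a b c} : FreeLatLe a b → FreeLatLe b c → FreeLatLe a c
  | le_join_left (a b) : FreeLatLe a (.join a b)
  | le_join_right (a b) : FreeLatLe b (.join a b)
  | join_le {a b c} : FreeLatLe a c → FreeLatLe b c → FreeLatLe (.join a b) c
  | meet_le_left (a b) : FreeLatLe (.meet a b) a
  | meet_le_right (a b) : FreeLatLe (.meet a b) b
  | le_meet {a b c} : FreeLatLe c a → FreeLatLe c b → FreeLatLe c (.meet a b)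



theorem freeLatLe_sound {X L : Type} [Lattice L] {σ : X → L} {s t : LatTerm X}
    (h : FreeLatLe s t) : s.eval σ ≤ t.eval σ := by
  induction h with
  | refl a => exact le_refl _
  | trans _ _ ih1 ih2 => exact le_trans ih1 ih2
  | le_join_left a b => exact le_sup_left
  | le_join_right a b => exact le_sup_right
  | join_le _ _ ih1 ih2 => exact sup_le ih1 ih2
  | meet_le_left a b => exact inf_le_left
  | meet_le_right a b => exact inf_le_right
  | le_meet _ _ ih1 ih2 => exact le_inf ih1 ih2

theorem evalProp_le {X : Type} (x : X) (t : LatTerm X)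
    (h : t.eval (fun y : X => (y = x : Prop))) : FreeLatLe (LatTerm.var x) t := by
  induction t with
  | var y => cases h; exact .refl _
  | meet u v ihu ihv =>
    exact .le_meet (ihu h.1) (ihv h.2)
  | join u v ihu ihv =>
    rcases h with h | h
    · exact .trans (ihu h) (.le_join_left u v)
    · exact .trans (ihv h) (.le_join_right u v)

theorem stmt_4 {X : Type} (x : X) (a b : LatTerm X)
    (h : FreeLatLe (LatTerm.var x) (LatTerm.join a b)) :
    FreeLatLe (LatTerm.var x) a ∨ FreeLatLe (LatTerm.var x) b := by
  have hs := freeLatLe_sound (σ := fun y : X => (y = x)) h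
  simp only [LatTerm.eval, le_sup_iff] at hs
  rcases hs with h1 | h1
  · exact Or.inl (evalProp_le x a (h1 trivial))
  · exact Or.inr (evalProp_le x b (h1 trivial))
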